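/- Let 0 < α < 1 and α ≠ 1/2. There exists a unique continuous function L : [0,1] → [0,1] satisfying L(x) = α·L(2x) for 0 ≤ x < 1/2 and L(x) = (1-α)·L(2x-1) + α for 1/2 ≤ x ≤ 1. -/
import Mathlib

open Set Function

namespace SalemAux

noncomputable def pr : ℝ → Icc (0:ℝ) 1 := projIcc 0 1 zero_le_one

def e0 : Icc (0:ℝ) 1 := ⟨0, by norm_num⟩
def e1 : Icc (0:ℝ) 1 := ⟨1, by norm_num⟩

def SalemSet : Set C(Icc (0:ℝ) 1, ℝ) :=
  {f | (∀ x, f x ∈ Icc (0:ℝ) 1) ∧ f e0 = 0 ∧ f e1 = 1}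

lemma isClosed_salemSet : IsClosed SalemSet := by
  have h1 : IsClosed {f : C(Icc (0:ℝ) 1, ℝ) | ∀ x, f x ∈ Icc (0:ℝ) 1} := by
    have : {f : C(Icc (0:ℝ) 1, ℝ) | ∀ x, f x ∈ Icc (0:ℝ) 1}
        = ⋂ x, (fun f : C(Icc (0:ℝ) 1, ℝ) => f x) ⁻¹' (Icc 0 1) := by
      ext f; simp [Set.mem_iInter]
    rw [this]
    exact isClosed_iInter fun x =>
      isClosed_Icc.preimage (continuous_eval_const x)
  have h2 : IsClosed {f : C(Icc (0:ℝ) 1, ℝ) | f e0 = 0} :=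
    isClosed_singleton.preimage (continuous_eval_const e0)
  have h3 : IsClosed {f : C(Icc (0:ℝ) 1, ℝ) | f e1 = 1} :=
    isClosed_singleton.preimage (continuous_eval_const e1)
  have : SalemSet = {f : C(Icc (0:ℝ) 1, ℝ) | ∀ x, f x ∈ Icc (0:ℝ) 1}
      ∩ ({f | f e0 = 0} ∩ {f | f e1 = 1}) := by
    ext f; simp [SalemSet, and_assoc]
  rw [this]
  exact h1.inter (h2.inter h3)

noncomputable def Tfun (α : ℝ) (f : C(Icc (0:ℝ) 1, ℝ)) : Icc (0:ℝ) 1 → ℝ :=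
  fun x => if (x:ℝ) ≤ 1/2 then α * f (pr (2*x)) else (1-α) * f (pr (2*x - 1)) + α

lemma continuous_Tfun (α : ℝ) (f : C(Icc (0:ℝ) 1, ℝ))
    (hf0 : f e0 = 0) (hf1 : f e1 = 1) : Continuous (Tfun α f) := by
  apply Continuous.if_le
  · exact continuous_const.mul (f.continuous.comp (continuous_projIcc.comp
      (by fun_prop)))
  · exact (continuous_const.mul (f.continuous.comp (continuous_projIcc.comp
      (by fun_prop)))).add continuous_const
  · exact continuous_subtype_val
  · exact continuous_const
  · intro x hx
    have h2x : 2 * (x:ℝ) = 1 := by rw [hx]; norm_num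
    have h2x' : 2 * (x:ℝ) - 1 = 0 := by rw [hx]; norm_num
    have : pr (2 * (x:ℝ)) = e1 := by
      rw [h2x]; simp [pr, e1, projIcc_of_mem]
    rw [this, h2x']
    have : pr (0:ℝ) = e0 := by simp [pr, e0, projIcc_of_mem]
    rw [this, hf0, hf1]
    ring

noncomputable def T (α : ℝ) (h0 : 0 < α) (h1 : α < 1) (f : SalemSet) : SalemSet := by
  refine ⟨⟨Tfun α f.1, continuous_Tfun α f.1 f.2.2.1 f.2.2.2⟩, ?_, ?_, ?_⟩
  · intro x
    simp only [ContinuousMap.coe_mk, Tfun]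
    split_ifs with h
    · have hy := f.2.1 (pr (2*(x:ℝ)))
      constructor
      · exact mul_nonneg h0.le hy.1
      · calc α * f.1 (pr (2*(x:ℝ))) ≤ α * 1 := by
              exact mul_le_mul_of_nonneg_left hy.2 h0.le
          _ ≤ 1 := by linarith
    · have hy := f.2.1 (pr (2*(x:ℝ) - 1))
      constructor
      · nlinarith [hy.1, hy.2]
      · nlinarith [hy.1, hy.2]
  · show Tfun α f.1 e0 = 0
    have hle : ((e0 : Icc (0:ℝ) 1) : ℝ) ≤ 1/2 := by norm_num [e0]
    simp only [Tfun, if_pos hle]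
    have h2 : 2 * ((e0 : Icc (0:ℝ) 1) : ℝ) = 0 := by norm_num [e0]
    rw [h2, show pr (0:ℝ) = e0 from by simp [pr, e0, projIcc_of_mem], f.2.2.1, mul_zero]
  · show Tfun α f.1 e1 = 1
    have hle : ¬ ((e1 : Icc (0:ℝ) 1) : ℝ) ≤ 1/2 := by norm_num [e1]
    simp only [Tfun, if_neg hle]
    have h2 : 2 * ((e1 : Icc (0:ℝ) 1) : ℝ) - 1 = 1 := by norm_num [e1]
    rw [h2, show pr (1:ℝ) = e1 from by simp [pr, e1, projIcc_of_mem], f.2.2.2]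
    ring

lemma pr_of_mem {x : ℝ} (hx : x ∈ Icc (0:ℝ) 1) : pr x = ⟨x, hx⟩ :=
  projIcc_of_mem _ hx

end SalemAux

open SalemAux Set

/-- Salem's singular function: existence and uniqueness of a continuous
solution on [0,1] of the de Rham functional equation. -/
theorem salem_exists_unique (α : ℝ) (h0 : 0 < α) (h1 : α < 1) (hne : α ≠ 1/2) :
    ∃ L : ℝ → ℝ,
      (ContinuousOn L (Set.Icc 0 1) ∧
       (∀ x ∈ Set.Icc (0:ℝ) 1, L x ∈ Set.Icc (0:ℝ) 1) ∧
       (∀ x ∈ Set.Ico (0:ℝ) (1/2), L x = α * L (2*x)) ∧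
       (∀ x ∈ Set.Icc (1/2:ℝ) 1, L x = (1-α) * L (2*x - 1) + α)) ∧
      ∀ L' : ℝ → ℝ,
        (ContinuousOn L' (Set.Icc 0 1) ∧
         (∀ x ∈ Set.Icc (0:ℝ) 1, L' x ∈ Set.Icc (0:ℝ) 1) ∧
         (∀ x ∈ Set.Ico (0:ℝ) (1/2), L' x = α * L' (2*x)) ∧
         (∀ x ∈ Set.Icc (1/2:ℝ) 1, L' x = (1-α) * L' (2*x - 1) + α)) →
        ∀ x ∈ Set.Icc (0:ℝ) 1, L' x = L x := by
  have hKr0 : (0:ℝ) ≤ max α (1-α) := le_max_of_le_left h0.le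
  set K : NNReal := ⟨max α (1-α), hKr0⟩ with hKdef
  have hKcoe : (K:ℝ) = max α (1-α) := rfl
  have hK1 : K < 1 := by
    rw [← NNReal.coe_lt_coe, hKcoe, NNReal.coe_one]
    exact max_lt h1 (by linarith)
  have key : ∀ f g : SalemSet, dist (T α h0 h1 f) (T α h0 h1 g) ≤ (K:ℝ) * dist f g := by
    intro f g
    have hd0 : (0:ℝ) ≤ dist f g := dist_nonneg
    rw [Subtype.dist_eq, ContinuousMap.dist_le (by positivity)]
    intro x
    have hfg : ∀ y, dist (f.1 y) (g.1 y) ≤ dist f g := by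
      intro y
      rw [Subtype.dist_eq]
      exact ContinuousMap.dist_apply_le_dist y
    show dist (Tfun α f.1 x) (Tfun α g.1 x) ≤ (K:ℝ) * dist f g
    simp only [Tfun]
    split_ifs with h
    · rw [Real.dist_eq, show α * f.1 (pr (2*(x:ℝ))) - α * g.1 (pr (2*(x:ℝ)))
        = α * (f.1 (pr (2*(x:ℝ))) - g.1 (pr (2*(x:ℝ)))) from by ring, abs_mul,
        abs_of_nonneg h0.le]
      calc α * |f.1 (pr (2*(x:ℝ))) - g.1 (pr (2*(x:ℝ)))| ≤ α * dist f g := by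
            refine mul_le_mul_of_nonneg_left ?_ h0.le
            rw [← Real.dist_eq]; exact hfg _
        _ ≤ (K:ℝ) * dist f g := by
            rw [hKcoe]; exact mul_le_mul_of_nonneg_right (le_max_left _ _) hd0
    · rw [Real.dist_eq, show (1-α) * f.1 (pr (2*(x:ℝ)-1)) + α - ((1-α) * g.1 (pr (2*(x:ℝ)-1)) + α)
        = (1-α) * (f.1 (pr (2*(x:ℝ)-1)) - g.1 (pr (2*(x:ℝ)-1))) from by ring, abs_mul,
        abs_of_nonneg (by linarith : (0:ℝ) ≤ 1-α)]
      calc (1-α) * |f.1 (pr (2*(x:ℝ)-1)) - g.1 (pr (2*(x:ℝ)-1))| ≤ (1-α) * dist f g := by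
            refine mul_le_mul_of_nonneg_left ?_ (by linarith)
            rw [← Real.dist_eq]; exact hfg _
        _ ≤ (K:ℝ) * dist f g := by
            rw [hKcoe]; exact mul_le_mul_of_nonneg_right (le_max_right _ _) hd0
  haveI : CompleteSpace SalemSet := isClosed_salemSet.completeSpace_coe
  haveI : Nonempty SalemSet := ⟨⟨⟨fun x => x, continuous_subtype_val⟩, fun x => x.2, rfl, rfl⟩⟩
  have hC : ContractingWith K (T α h0 h1) := ⟨hK1, LipschitzWith.of_dist_le_mul key⟩
  set F : SalemSet := ContractingWith.fixedPoint (T α h0 h1) hC with hFdef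
  have hF : T α h0 h1 F = F := hC.fixedPoint_isFixedPt
  have hFx : ∀ y, F.1 y = Tfun α F.1 y := by
    intro y
    conv_lhs => rw [← hF]
    rfl
  refine ⟨fun x => F.1 (pr x), ⟨?_, ?_, ?_, ?_⟩, ?_⟩
  · exact (F.1.continuous.comp continuous_projIcc).continuousOn
  · intro x _; exact F.2.1 _
  · intro x hx
    have hx1 : x ∈ Icc (0:ℝ) 1 := ⟨hx.1, by linarith [hx.2]⟩
    have h2x : 2*x ∈ Icc (0:ℝ) 1 := ⟨by linarith [hx.1], by linarith [hx.2]⟩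
    show F.1 (pr x) = α * F.1 (pr (2*x))
    rw [pr_of_mem hx1, hFx]
    show Tfun α F.1 ⟨x, hx1⟩ = α * F.1 (pr (2*x))
    simp only [Tfun]
    rw [if_pos (show ((⟨x, hx1⟩ : Icc (0:ℝ) 1):ℝ) ≤ 1/2 from le_of_lt hx.2)]
  · intro x hx
    have hx1 : x ∈ Icc (0:ℝ) 1 := ⟨by linarith [hx.1], hx.2⟩
    show F.1 (pr x) = (1-α) * F.1 (pr (2*x - 1)) + α
    rw [pr_of_mem hx1, hFx]
    show Tfun α F.1 ⟨x, hx1⟩ = (1-α) * F.1 (pr (2*x - 1)) + α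
    simp only [Tfun]
    split_ifs with h
    · have hxeq : x = 1/2 := le_antisymm h hx.1
      have h2 : 2 * ((⟨x, hx1⟩ : Icc (0:ℝ) 1):ℝ) = 1 := by
        show 2 * x = 1; rw [hxeq]; norm_num
      rw [h2, show (1:ℝ) - 1 = 0 from by norm_num, show pr (1:ℝ) = e1 from by simp [pr, e1, projIcc_of_mem],
        show pr (0:ℝ) = e0 from by simp [pr, e0, projIcc_of_mem], F.2.2.2, F.2.2.1]
      ring
    · rfl
  · rintro L' ⟨hL'c, hL'm, hL'a, hL'b⟩
    have hL'0 : L' 0 = 0 := by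
      have := hL'a 0 ⟨le_refl 0, by norm_num⟩
      have h20 : (2:ℝ) * 0 = 0 := by norm_num
      rw [h20] at this
      nlinarith
    have hL'1 : L' 1 = 1 := by
      have := hL'b 1 ⟨by norm_num, le_refl 1⟩
      have h21 : (2:ℝ) * 1 - 1 = 1 := by norm_num
      rw [h21] at this
      nlinarith
    have hF' : ∃ F' : SalemSet, ∀ y : Icc (0:ℝ) 1, F'.1 y = L' y := by
      refine ⟨⟨⟨fun y => L' y, hL'c.restrict⟩, fun y => hL'm y y.2, ?_, ?_⟩, fun y => rfl⟩
      · exact hL'0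
      · exact hL'1
    obtain ⟨F', hF'app⟩ := hF'
    have hfix : Function.IsFixedPt (T α h0 h1) F' := by
      apply Subtype.ext
      apply ContinuousMap.ext
      intro y
      show Tfun α F'.1 y = F'.1 y
      rw [hF'app]
      simp only [Tfun]
      split_ifs with h
      · rcases lt_or_eq_of_le h with h' | h'
        · have h2y : 2*(y:ℝ) ∈ Icc (0:ℝ) 1 := ⟨by linarith [y.2.1], by linarith⟩
          rw [pr_of_mem h2y, hF'app]
          exact (hL'a (y:ℝ) ⟨y.2.1, h'⟩).symm
        · have h2 : 2 * (y:ℝ) = 1 := by rw [h']; norm_num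
          rw [h2, show pr (1:ℝ) = e1 from by simp [pr, e1, projIcc_of_mem], hF'app]
          have hLy : L' (y:ℝ) = (1-α) * L' (2*(y:ℝ) - 1) + α :=
            hL'b (y:ℝ) ⟨le_of_eq h'.symm, y.2.2⟩
          have h3 : 2 * (y:ℝ) - 1 = 0 := by rw [h']; norm_num
          rw [h3] at hLy
          show α * L' ((e1 : Icc (0:ℝ) 1):ℝ) = L' (y:ℝ)
          rw [show ((e1 : Icc (0:ℝ) 1):ℝ) = 1 from rfl, hL'1, hLy, hL'0]
          ring
      · have hy : (1:ℝ)/2 ≤ (y:ℝ) := le_of_lt (not_le.mp h)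
        have h2y : 2*(y:ℝ) - 1 ∈ Icc (0:ℝ) 1 := ⟨by linarith, by linarith [y.2.2]⟩
        rw [pr_of_mem h2y, hF'app]
        exact (hL'b (y:ℝ) ⟨hy, y.2.2⟩).symm
    have hFF : F' = F := hC.fixedPoint_unique hfix
    intro x hx
    show L' x = F.1 (pr x)
    rw [pr_of_mem hx, ← hFF, hF'app]
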